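/- With 𝓐, A_a, A_b, B as in the limit problem: if λ ∈ σ(A_a) ∩ σ(A_b) but λ ∉ σ(B), then λ is an eigenvalue of 𝓐 with geometric and algebraic multiplicity 2; the eigenspace is spanned by U = (u_λ, 0, 0) and V = (0, 0, v_λ), and the equation (𝓐 − λ)Y = c₁U + c₂V has no solution unless c₁ = c₂ = 0. In particular the root subspace equals the eigenspace (no Jordan chains). -/

import Mathlib

open Set

def Reg2 (u : ℝ → ℂ) (s : Set ℝ) : Prop :=
  (∀ x ∈ s, DifferentiableAt ℝ u x) ∧ ∀ x ∈ s, DifferentiableAt ℝ (deriv u) x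

/-- `u` is an eigenfunction of `A_a` for `λ`. -/
def EigfunAa (a α : ℝ) (q r : ℝ → ℝ) (lam : ℂ) (u : ℝ → ℂ) : Prop :=
  Reg2 u (Icc a 0) ∧
  (∀ x ∈ Icc a 0, -(deriv (deriv u) x) + (q x : ℂ) * u x = lam * (r x : ℂ) * u x) ∧
  u a * (Real.cos α : ℂ) + deriv u a * (Real.sin α : ℂ) = 0 ∧
  u 0 = 0 ∧ ∃ x ∈ Icc a 0, u x ≠ 0

/-- `v` is an eigenfunction of `A_b` for `λ`. -/
def EigfunAb (b β : ℝ) (q r : ℝ → ℝ) (lam : ℂ) (v : ℝ → ℂ) : Prop :=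
  Reg2 v (Icc 0 b) ∧
  (∀ x ∈ Icc 0 b, -(deriv (deriv v) x) + (q x : ℂ) * v x = lam * (r x : ℂ) * v x) ∧
  v 0 = 0 ∧
  v b * (Real.cos β : ℂ) + deriv v b * (Real.sin β : ℂ) = 0 ∧
  ∃ x ∈ Icc 0 b, v x ≠ 0

/-- `w` is an eigenfunction of the Neumann operator `B` for `λ`. -/
def EigfunB (hh : ℝ → ℝ) (lam : ℂ) (w : ℝ → ℂ) : Prop :=
  Reg2 w (Icc (-1) 1) ∧
  (∀ t ∈ Icc (-1:ℝ) 1, -(deriv (deriv w) t) = lam * (hh t : ℂ) * w t) ∧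
  deriv w (-1) = 0 ∧ deriv w 1 = 0 ∧ ∃ t ∈ Icc (-1:ℝ) 1, w t ≠ 0

def EigAa (a α : ℝ) (q r : ℝ → ℝ) (lam : ℂ) : Prop := ∃ u, EigfunAa a α q r lam u
def EigAb (b β : ℝ) (q r : ℝ → ℝ) (lam : ℂ) : Prop := ∃ v, EigfunAb b β q r lam v
def EigB (hh : ℝ → ℝ) (lam : ℂ) : Prop := ∃ w, EigfunB hh lam w

/-- solution of `−u''+qu = λru` on `(a,0)` with `ℓ_a u = 0` and `u(0) = c`
(this is `T_a(λ)` applied to boundary data `c`). -/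
def SolAa (a α : ℝ) (q r : ℝ → ℝ) (lam : ℂ) (c : ℂ) (u : ℝ → ℂ) : Prop :=
  Reg2 u (Icc a 0) ∧
  (∀ x ∈ Icc a 0, -(deriv (deriv u) x) + (q x : ℂ) * u x = lam * (r x : ℂ) * u x) ∧
  u a * (Real.cos α : ℂ) + deriv u a * (Real.sin α : ℂ) = 0 ∧
  u 0 = c

/-- solution of `−v''+qv = λrv` on `(0,b)` with `v(0) = c` and `ℓ_b v = 0`
(this is `T_b(λ)` applied to boundary data `c`). -/
def SolAb (b β : ℝ) (q r : ℝ → ℝ) (lam : ℂ) (c : ℂ) (v : ℝ → ℂ) : Prop :=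
  Reg2 v (Icc 0 b) ∧
  (∀ x ∈ Icc 0 b, -(deriv (deriv v) x) + (q x : ℂ) * v x = lam * (r x : ℂ) * v x) ∧
  v 0 = c ∧
  v b * (Real.cos β : ℂ) + deriv v b * (Real.sin β : ℂ) = 0

/-- `(u,w,v)` belongs to the domain of the block operator `𝓐`. -/
def DomA (a b α β : ℝ) (u w v : ℝ → ℂ) : Prop :=
  Reg2 u (Icc a 0) ∧ Reg2 w (Icc (-1) 1) ∧ Reg2 v (Icc 0 b) ∧
  u a * (Real.cos α : ℂ) + deriv u a * (Real.sin α : ℂ) = 0 ∧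
  deriv w (-1) = 0 ∧ deriv w 1 = 0 ∧
  v b * (Real.cos β : ℂ) + deriv v b * (Real.sin β : ℂ) = 0 ∧
  u 0 = w (-1) ∧ v 0 = w 1

/-- `(𝓐 − λ)(u,w,v) = (f,g,k)`, componentwise. -/
def MapA (a b : ℝ) (q r hh : ℝ → ℝ) (lam : ℂ) (u w v f g k : ℝ → ℂ) : Prop :=
  (∀ x ∈ Icc a 0,
    -(deriv (deriv u) x) + (q x : ℂ) * u x - lam * (r x : ℂ) * u x = (r x : ℂ) * f x) ∧
  (∀ t ∈ Icc (-1:ℝ) 1,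
    -(deriv (deriv w) t) - lam * (hh t : ℂ) * w t = (hh t : ℂ) * g t) ∧
  (∀ x ∈ Icc 0 b,
    -(deriv (deriv v) x) + (q x : ℂ) * v x - lam * (r x : ℂ) * v x = (r x : ℂ) * k x)

def ZeroF : ℝ → ℂ := fun _ => 0

def Nontriv (a b : ℝ) (u w v : ℝ → ℂ) : Prop :=
  (∃ x ∈ Icc a 0, u x ≠ 0) ∨ (∃ t ∈ Icc (-1:ℝ) 1, w t ≠ 0) ∨ (∃ x ∈ Icc 0 b, v x ≠ 0)

/-- `(u,w,v)` is an eigenvector of `𝓐` corresponding to `λ`. -/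
def EigvecA (a b α β : ℝ) (q r hh : ℝ → ℝ) (lam : ℂ) (u w v : ℝ → ℂ) : Prop :=
  DomA a b α β u w v ∧ MapA a b q r hh lam u w v ZeroF ZeroF ZeroF ∧ Nontriv a b u w v

/-!
Once `λ ∉ σ(B)` kills the middle component, the interface conditions leave two Sturm–Liouville
problems, on `[a,0]` and on `[0,b]`, each with a Dirichlet condition at `0`.
Uniqueness for the Cauchy problem at `0` makes every solution vanishing at `0` a multiple of the
eigenfunction, which gives the eigenspace. For the Jordan chains, Lagrange's identity shows that
the conjugate Wronskian `W = u' φ̄ - u φ̄'` of a solution of `(A - λ)u = κ φ` and the eigenfunction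
`φ` satisfies `W' = -κ r |φ|²`, while the boundary conditions make `W` vanish at both ends. If
`κ ≠ 0`, the real part of `W / (-κ)` would then be monotone with equal endpoint values, so
`r |φ|² = 0`, i.e. `φ = 0`. This is the Fredholm alternative; taking `u = φ` the same argument
first shows that `λ` is real, which the identity `W' = -κ r |φ|²` needs.
-/

open Complex ComplexConjugate

lemma Reg2.continuousOn {u : ℝ → ℂ} {s : Set ℝ} (hu : Reg2 u s) : ContinuousOn u s :=
  fun x hx => (hu.1 x hx).continuousAt.continuousWithinAt

noncomputable def conjWronskian (u φ : ℝ → ℂ) (x : ℝ) : ℂ :=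
  deriv u x * star (φ x) - u x * star (deriv φ x)

lemma hasDerivAt_conjWronskian {u φ : ℝ → ℂ} {s : Set ℝ} (hu : Reg2 u s) (hφ : Reg2 φ s)
    {x : ℝ} (hx : x ∈ s) :
    HasDerivAt (conjWronskian u φ)
      (deriv (deriv u) x * star (φ x) - u x * star (deriv (deriv φ) x)) x :=
  (((hu.2 x hx).hasDerivAt.mul (hφ.1 x hx).hasDerivAt.star).sub
    ((hu.1 x hx).hasDerivAt.mul (hφ.2 x hx).hasDerivAt.star)).congr_deriv (by ring)

lemma conjWronskian_eq_zero_of_robin {u φ : ℝ → ℂ} {x α : ℝ}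
    (hu : u x * (Real.cos α : ℂ) + deriv u x * (Real.sin α : ℂ) = 0)
    (hφ : φ x * (Real.cos α : ℂ) + deriv φ x * (Real.sin α : ℂ) = 0) :
    conjWronskian u φ x = 0 := by
  have hφ' : star (φ x) * (Real.cos α : ℂ) + star (deriv φ x) * (Real.sin α : ℂ) = 0 := by
    simpa only [star_add, star_mul', star_zero, star_def, conj_ofReal] using congrArg star hφ
  unfold conjWronskian
  rcases eq_or_ne (Real.sin α : ℂ) 0 with hs | hs
  · have hc : (Real.cos α : ℂ) ≠ 0 := by
      have := Real.sin_sq_add_cos_sq α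
      norm_cast at hs ⊢
      intro hc
      simp [hs, hc] at this
    simp only [hs, mul_zero, add_zero, mul_eq_zero, hc, or_false] at hu hφ'
    simp [hu, hφ']
  · refine (mul_eq_zero.mp ?_).resolve_right hs
    linear_combination star (φ x) * hu - u x * hφ'

lemma conjWronskian_eq_zero_of_eq_zero {u φ : ℝ → ℂ} {x : ℝ} (hu : u x = 0) (hφ : φ x = 0) :
    conjWronskian u φ x = 0 := by
  simp [conjWronskian, hu, hφ]

lemma eq_zero_of_hasDerivAt_nonneg_of_eq {F f : ℝ → ℝ} {c d : ℝ}
    (hF : ∀ x ∈ Icc c d, HasDerivAt F (f x) x) (hf : ∀ x ∈ Ioo c d, 0 ≤ f x)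
    (hFcd : F c = F d) {x : ℝ} (hx : x ∈ Ioo c d) : f x = 0 := by
  have hmono : MonotoneOn F (Icc c d) := by
    refine monotoneOn_of_deriv_nonneg (convex_Icc c d)
      (HasDerivAt.continuousOn hF) (fun y hy => ?_) (fun y hy => ?_) <;>
      rw [interior_Icc] at hy
    · exact (hF y (Ioo_subset_Icc_self hy)).differentiableAt.differentiableWithinAt
    · exact (hF y (Ioo_subset_Icc_self hy)).deriv ▸ hf y hy
  have hcd : c ≤ d := hx.1.le.trans hx.2.le
  have hmin : IsLocalMin F x := by
    filter_upwards [Icc_mem_nhds hx.1 hx.2] with y hy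
    have hFx : F x = F c :=
      le_antisymm (hFcd ▸ hmono (Ioo_subset_Icc_self hx) (right_mem_Icc.2 hcd) hx.2.le)
        (hmono (left_mem_Icc.2 hcd) (Ioo_subset_Icc_self hx) hx.1.le)
    exact hFx ▸ hmono (left_mem_Icc.2 hcd) hy hy.1
  exact hmin.hasDerivAt_eq_zero (hF x (Ioo_subset_Icc_self hx))

lemma eq_zero_of_conjWronskian_eq_zero {r : ℝ → ℝ} {u φ : ℝ → ℂ} {c d : ℝ} (hcd : c < d)
    (hr : ∀ x, 0 < r x) (hu : Reg2 u (Icc c d)) (hφ : Reg2 φ (Icc c d))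
    (hne : ∃ x ∈ Icc c d, φ x ≠ 0) {κ : ℂ}
    (hid : ∀ x ∈ Icc c d, deriv (deriv u) x * star (φ x) - u x * star (deriv (deriv φ) x)
      = κ * (r x * normSq (φ x) : ℝ))
    (hWc : conjWronskian u φ c = 0) (hWd : conjWronskian u φ d = 0) : κ = 0 := by
  by_contra hκ
  have hF : ∀ x ∈ Icc c d,
      HasDerivAt (fun y => (conjWronskian u φ y / κ).re) (r x * normSq (φ x)) x := by
    intro x hx
    have h := (hasDerivAt_conjWronskian hu hφ hx).div_const κ
    rw [hid x hx, mul_div_cancel_left₀ _ hκ] at h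
    have h' := reCLM.hasFDerivAt.comp_hasDerivAt x h
    simp only [reCLM_apply, ofReal_re] at h'
    exact h'
  have hφ0 : EqOn φ 0 (Ioo c d) := fun x hx => by
    have := eq_zero_of_hasDerivAt_nonneg_of_eq hF
      (fun y _ => mul_nonneg (hr y).le (normSq_nonneg _)) (by simp [hWc, hWd]) hx
    simpa [(hr x).ne'] using this
  obtain ⟨x₀, hx₀, hφx₀⟩ := hne
  exact hφx₀ (hφ0.of_subset_closure hφ.continuousOn continuousOn_const Ioo_subset_Icc_self
    (by rw [closure_Ioo hcd.ne]) hx₀)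

lemma star_eq_of_sturmLiouville {q r : ℝ → ℝ} {lam : ℂ} {φ : ℝ → ℂ} {c d : ℝ} (hcd : c < d)
    (hr : ∀ x, 0 < r x) (hφ : Reg2 φ (Icc c d))
    (hode : ∀ x ∈ Icc c d, -(deriv (deriv φ) x) + (q x : ℂ) * φ x = lam * (r x : ℂ) * φ x)
    (hne : ∃ x ∈ Icc c d, φ x ≠ 0)
    (hWc : conjWronskian φ φ c = 0) (hWd : conjWronskian φ φ d = 0) : star lam = lam := by
  refine sub_eq_zero.1 (eq_zero_of_conjWronskian_eq_zero hcd hr hφ hφ hne (fun x hx => ?_) hWc hWd)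
  have h := congrArg star (hode x hx)
  simp only [star_add, star_neg, star_mul', star_def, conj_ofReal] at h ⊢
  rw [ofReal_mul, ← mul_conj]
  linear_combination -(conj (φ x)) * hode x hx + φ x * h

lemma eq_zero_of_sturmLiouville_rhs {q r : ℝ → ℝ} {lam : ℂ} {φ u : ℝ → ℂ} {c d : ℝ}
    (hcd : c < d) (hr : ∀ x, 0 < r x) (hlam : star lam = lam) (hφ : Reg2 φ (Icc c d))
    (hode : ∀ x ∈ Icc c d, -(deriv (deriv φ) x) + (q x : ℂ) * φ x = lam * (r x : ℂ) * φ x)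
    (hne : ∃ x ∈ Icc c d, φ x ≠ 0) (hu : Reg2 u (Icc c d)) {κ : ℂ}
    (hu_ode : ∀ x ∈ Icc c d, -(deriv (deriv u) x) + (q x : ℂ) * u x - lam * (r x : ℂ) * u x
      = (r x : ℂ) * (κ * φ x))
    (hWc : conjWronskian u φ c = 0) (hWd : conjWronskian u φ d = 0) : κ = 0 := by
  refine neg_eq_zero.1 (eq_zero_of_conjWronskian_eq_zero hcd hr hu hφ hne (fun x hx => ?_) hWc hWd)
  have h := congrArg star (hode x hx)
  simp only [star_add, star_neg, star_mul', hlam, star_def, conj_ofReal] at h ⊢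
  rw [ofReal_mul, ← mul_conj]
  linear_combination -(conj (φ x)) * hu_ode x hx + u x * h

lemma Reg2.const_mul {u : ℝ → ℂ} {s : Set ℝ} (hu : Reg2 u s) (k : ℂ) :
    Reg2 (fun x => k * u x) s := by
  refine ⟨fun x hx => (hu.1 x hx).const_mul k, fun x hx => ?_⟩
  rw [deriv_const_mul_field']
  exact (hu.2 x hx).const_mul k

lemma deriv_deriv_const_mul (u : ℝ → ℂ) (k : ℂ) (x : ℝ) :
    deriv (deriv fun y => k * u y) x = k * deriv (deriv u) x := by
  simp only [deriv_const_mul_field']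

lemma lipschitzWith_companion {Q : ℂ} {C : ℝ} (hQ : ‖Q‖ ≤ C) :
    LipschitzWith (max 1 C.toNNReal) (fun p : ℂ × ℂ => (p.2, Q * p.1)) := by
  refine (LipschitzWith.prod_snd.prodMk
    ((lipschitzWith_smul Q).comp LipschitzWith.prod_fst)).weaken (max_le_max le_rfl ?_)
  rw [mul_one, ← NNReal.coe_le_coe, coe_nnnorm]
  exact hQ.trans (Real.le_coe_toNNReal C)

lemma eqOn_of_ode_of_mem_Icc {Q : ℝ → ℂ} {C : ℝ} (hQ : ∀ x, ‖Q x‖ ≤ C) {c d t₀ : ℝ}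
    (ht₀ : t₀ ∈ Icc c d) {u₁ u₂ : ℝ → ℂ} (hu₁ : Reg2 u₁ (Icc c d)) (hu₂ : Reg2 u₂ (Icc c d))
    (hode₁ : ∀ x ∈ Icc c d, deriv (deriv u₁) x = Q x * u₁ x)
    (hode₂ : ∀ x ∈ Icc c d, deriv (deriv u₂) x = Q x * u₂ x)
    (h₀ : u₁ t₀ = u₂ t₀) (h₀' : deriv u₁ t₀ = deriv u₂ t₀) : EqOn u₁ u₂ (Icc c d) := by
  set v : ℝ → ℂ × ℂ → ℂ × ℂ := fun t p => (p.2, Q t * p.1)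
  have hv (t : ℝ) : LipschitzOnWith (max 1 C.toNNReal) (v t) univ :=
    (lipschitzWith_companion (hQ t)).lipschitzOnWith
  have hphase {u : ℝ → ℂ} (hu : Reg2 u (Icc c d))
      (hode : ∀ x ∈ Icc c d, deriv (deriv u) x = Q x * u x) (t : ℝ) (ht : t ∈ Icc c d) :
      HasDerivAt (fun t => (u t, deriv u t)) (v t (u t, deriv u t)) t := by
    simpa only [v, ← hode t ht] using (hu.1 t ht).hasDerivAt.prodMk (hu.2 t ht).hasDerivAt
  have hcont₁ := HasDerivAt.continuousOn (hphase hu₁ hode₁)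
  have hcont₂ := HasDerivAt.continuousOn (hphase hu₂ hode₂)
  have heq : EqOn (fun t => (u₁ t, deriv u₁ t)) (fun t => (u₂ t, deriv u₂ t)) (Icc c d) := by
    rw [← Icc_union_Icc_eq_Icc ht₀.1 ht₀.2]
    refine EqOn.union ?_ ?_
    · have hsub : Icc c t₀ ⊆ Icc c d := Icc_subset_Icc_right ht₀.2
      exact ODE_solution_unique_of_mem_Icc_left (fun t _ => hv t) (hcont₁.mono hsub)
        (fun t ht => (hphase hu₁ hode₁ t (hsub (Ioc_subset_Icc_self ht))).hasDerivWithinAt)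
        (fun _ _ => mem_univ _) (hcont₂.mono hsub)
        (fun t ht => (hphase hu₂ hode₂ t (hsub (Ioc_subset_Icc_self ht))).hasDerivWithinAt)
        (fun _ _ => mem_univ _) (Prod.ext h₀ h₀')
    · have hsub : Icc t₀ d ⊆ Icc c d := Icc_subset_Icc_left ht₀.1
      exact ODE_solution_unique_of_mem_Icc_right (fun t _ => hv t) (hcont₁.mono hsub)
        (fun t ht => (hphase hu₁ hode₁ t (hsub (Ico_subset_Icc_self ht))).hasDerivWithinAt)
        (fun _ _ => mem_univ _) (hcont₂.mono hsub)
        (fun t ht => (hphase hu₂ hode₂ t (hsub (Ico_subset_Icc_self ht))).hasDerivWithinAt)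
        (fun _ _ => mem_univ _) (Prod.ext h₀ h₀')
  exact fun x hx => congrArg Prod.fst (heq hx)

lemma exists_eq_const_mul_of_ode {Q : ℝ → ℂ} {C : ℝ} (hQ : ∀ x, ‖Q x‖ ≤ C) {c d t₀ : ℝ}
    (ht₀ : t₀ ∈ Icc c d) {φ u : ℝ → ℂ} (hφ : Reg2 φ (Icc c d))
    (hφode : ∀ x ∈ Icc c d, deriv (deriv φ) x = Q x * φ x) (hφ₀ : φ t₀ = 0)
    (hne : ∃ x ∈ Icc c d, φ x ≠ 0) (hu : Reg2 u (Icc c d))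
    (huode : ∀ x ∈ Icc c d, deriv (deriv u) x = Q x * u x) (hu₀ : u t₀ = 0) :
    ∃ k : ℂ, ∀ x ∈ Icc c d, u x = k * φ x := by
  have hmul (k : ℂ) : ∀ x ∈ Icc c d, deriv (deriv fun y => k * φ y) x = Q x * (k * φ x) :=
    fun x hx => by rw [deriv_deriv_const_mul, hφode x hx]; ring
  have hφ' : deriv φ t₀ ≠ 0 := by
    intro h
    obtain ⟨x, hx, hφx⟩ := hne
    refine hφx ((eqOn_of_ode_of_mem_Icc hQ ht₀ hφ (hφ.const_mul 0) hφode (hmul 0)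
      (by simp [hφ₀]) ?_ hx).trans (zero_mul _))
    simp [h]
  refine ⟨deriv u t₀ / deriv φ t₀, eqOn_of_ode_of_mem_Icc hQ ht₀ hu (hφ.const_mul _) huode
    (hmul _) (by simp [hu₀, hφ₀]) ?_⟩
  simp [deriv_const_mul_field', div_mul_cancel₀ _ hφ']

lemma exists_norm_potential_le {q r : ℝ → ℝ} (hqb : ∃ M, ∀ x, |q x| ≤ M) (hr : ∀ x, 0 < r x)
    (hrb : ∃ M, ∀ x, r x ≤ M) (lam : ℂ) : ∃ C, ∀ x, ‖(q x : ℂ) - lam * r x‖ ≤ C := by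
  obtain ⟨Mq, hMq⟩ := hqb
  obtain ⟨Mr, hMr⟩ := hrb
  refine ⟨Mq + ‖lam‖ * Mr, fun x => (norm_sub_le _ _).trans ?_⟩
  rw [norm_real, norm_mul, norm_real, Real.norm_of_nonneg (hr x).le]
  gcongr
  exacts [hMq x, hMr x]

@[simp]
lemma deriv_zeroF : deriv ZeroF = ZeroF :=
  funext fun x => deriv_const x 0

lemma reg2_zeroF (s : Set ℝ) : Reg2 ZeroF s :=
  ⟨fun _ _ => differentiableAt_const (0 : ℂ),
    fun _ _ => by rw [deriv_zeroF]; exact differentiableAt_const (0 : ℂ)⟩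

lemma DomA.eqOn_zero_of_not_eigB {a b α β : ℝ} {q r hh : ℝ → ℝ} {lam : ℂ} {u w v f k : ℝ → ℂ}
    (hB : ¬ EigB hh lam) (hdom : DomA a b α β u w v)
    (hmap : MapA a b q r hh lam u w v f ZeroF k) : ∀ t ∈ Icc (-1 : ℝ) 1, w t = 0 := by
  obtain ⟨-, hw, -, -, hw₁, hw₂, -⟩ := hdom
  by_contra! h
  obtain ⟨t, ht, hwt⟩ := h
  refine hB ⟨w, hw, fun s hs => ?_, hw₁, hw₂, t, ht, hwt⟩
  have h := hmap.2.1 s hs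
  simp only [ZeroF, mul_zero] at h
  linear_combination h

namespace EigfunAa

variable {a α : ℝ} {q r : ℝ → ℝ} {lam : ℂ} {φ : ℝ → ℂ}

lemma star_eq (hφ : EigfunAa a α q r lam φ) (ha : a < 0) (hr : ∀ x, 0 < r x) :
    star lam = lam := by
  obtain ⟨hreg, hode, hbc, h₀, hne⟩ := hφ
  exact star_eq_of_sturmLiouville ha hr hreg hode hne (conjWronskian_eq_zero_of_robin hbc hbc)
    (conjWronskian_eq_zero_of_eq_zero h₀ h₀)

lemma coeff_eq_zero (hφ : EigfunAa a α q r lam φ) (ha : a < 0) (hr : ∀ x, 0 < r x)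
    (hlam : star lam = lam) {b β : ℝ} {hh : ℝ → ℝ} {u w v g k : ℝ → ℂ} {κ : ℂ}
    (hdom : DomA a b α β u w v) (hmap : MapA a b q r hh lam u w v (fun x => κ * φ x) g k)
    (hw : w (-1) = 0) : κ = 0 := by
  obtain ⟨hreg, hode, hbc, h₀, hne⟩ := hφ
  obtain ⟨hu, -, -, hubc, -, -, -, hu₀, -⟩ := hdom
  exact eq_zero_of_sturmLiouville_rhs ha hr hlam hreg hode hne hu hmap.1
    (conjWronskian_eq_zero_of_robin hubc hbc) (conjWronskian_eq_zero_of_eq_zero (hu₀.trans hw) h₀)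

lemma exists_eq_const_mul (hφ : EigfunAa a α q r lam φ) {C : ℝ}
    (hQ : ∀ x, ‖(q x : ℂ) - lam * r x‖ ≤ C) {b β : ℝ} {hh : ℝ → ℝ} {u w v g k : ℝ → ℂ}
    (hdom : DomA a b α β u w v) (hmap : MapA a b q r hh lam u w v ZeroF g k)
    (hw : w (-1) = 0) : ∃ c : ℂ, ∀ x ∈ Icc a 0, u x = c * φ x := by
  obtain ⟨hreg, hode, -, h₀, hne⟩ := hφ
  obtain ⟨hu, -, -, -, -, -, -, hu₀, -⟩ := hdom
  have ha : a ≤ 0 := let ⟨x, hx, _⟩ := hne; hx.1.trans hx.2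
  refine exists_eq_const_mul_of_ode hQ (right_mem_Icc.2 ha) hreg
    (fun x hx => by linear_combination -hode x hx) h₀ hne hu (fun x hx => ?_) (hu₀.trans hw)
  have h := hmap.1 x hx
  simp only [ZeroF, mul_zero] at h
  linear_combination -h

lemma eigvecA (hφ : EigfunAa a α q r lam φ) (b β : ℝ) (hh : ℝ → ℝ) :
    EigvecA a b α β q r hh lam φ ZeroF ZeroF := by
  obtain ⟨hreg, hode, hbc, h₀, hne⟩ := hφ
  refine ⟨⟨hreg, reg2_zeroF _, reg2_zeroF _, hbc, ?_⟩,
    ⟨fun x hx => by simp only [ZeroF, mul_zero]; linear_combination hode x hx, ?_, ?_⟩,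
    Or.inl hne⟩
  all_goals simp [ZeroF, h₀]

end EigfunAa

namespace EigfunAb

variable {b β : ℝ} {q r : ℝ → ℝ} {lam : ℂ} {φ : ℝ → ℂ}

lemma coeff_eq_zero (hφ : EigfunAb b β q r lam φ) (hb : 0 < b) (hr : ∀ x, 0 < r x)
    (hlam : star lam = lam) {a α : ℝ} {hh : ℝ → ℝ} {u w v f g : ℝ → ℂ} {κ : ℂ}
    (hdom : DomA a b α β u w v) (hmap : MapA a b q r hh lam u w v f g (fun x => κ * φ x))
    (hw : w 1 = 0) : κ = 0 := by
  obtain ⟨hreg, hode, h₀, hbc, hne⟩ := hφ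
  obtain ⟨-, -, hv, -, -, -, hvbc, -, hv₀⟩ := hdom
  exact eq_zero_of_sturmLiouville_rhs hb hr hlam hreg hode hne hv hmap.2.2
    (conjWronskian_eq_zero_of_eq_zero (hv₀.trans hw) h₀) (conjWronskian_eq_zero_of_robin hvbc hbc)

lemma exists_eq_const_mul (hφ : EigfunAb b β q r lam φ) {C : ℝ}
    (hQ : ∀ x, ‖(q x : ℂ) - lam * r x‖ ≤ C) {a α : ℝ} {hh : ℝ → ℝ} {u w v f g : ℝ → ℂ}
    (hdom : DomA a b α β u w v) (hmap : MapA a b q r hh lam u w v f g ZeroF)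
    (hw : w 1 = 0) : ∃ c : ℂ, ∀ x ∈ Icc 0 b, v x = c * φ x := by
  obtain ⟨hreg, hode, h₀, -, hne⟩ := hφ
  obtain ⟨-, -, hv, -, -, -, -, -, hv₀⟩ := hdom
  have hb : 0 ≤ b := let ⟨x, hx, _⟩ := hne; hx.1.trans hx.2
  refine exists_eq_const_mul_of_ode hQ (left_mem_Icc.2 hb) hreg
    (fun x hx => by linear_combination -hode x hx) h₀ hne hv (fun x hx => ?_) (hv₀.trans hw)
  have h := hmap.2.2 x hx
  simp only [ZeroF, mul_zero] at h
  linear_combination -h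

lemma eigvecA (hφ : EigfunAb b β q r lam φ) (a α : ℝ) (hh : ℝ → ℝ) :
    EigvecA a b α β q r hh lam ZeroF ZeroF φ := by
  obtain ⟨hreg, hode, h₀, hbc, hne⟩ := hφ
  refine ⟨⟨reg2_zeroF _, reg2_zeroF _, hreg, ?_, ?_, ?_, hbc, ?_, ?_⟩,
    ⟨?_, ?_, fun x hx => by simp only [ZeroF, mul_zero]; linear_combination hode x hx⟩,
    Or.inr (Or.inr hne)⟩
  all_goals simp [ZeroF, h₀]

end EigfunAb

theorem stmt13_general (a b α β : ℝ) (ha : a < 0) (hb : 0 < b) (q r hh : ℝ → ℝ)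
    (hqb : ∃ M, ∀ x, |q x| ≤ M)
    (hrpos : ∃ m > 0, ∀ x, m ≤ r x) (hrb : ∃ M, ∀ x, r x ≤ M)
    (lam : ℂ)
    (hB : ¬ EigB hh lam)
    (ulam vlam : ℝ → ℂ)
    (hul : EigfunAa a α q r lam ulam) (hvl : EigfunAb b β q r lam vlam) :
    -- U and V are eigenvectors of 𝓐
    EigvecA a b α β q r hh lam ulam ZeroF ZeroF ∧
    EigvecA a b α β q r hh lam ZeroF ZeroF vlam ∧
    -- geometric multiplicity 2: every eigenvector is a combination of U and V
    (∀ u w v, EigvecA a b α β q r hh lam u w v → ∃ c₁ c₂ : ℂ,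
      (∀ x ∈ Icc a 0, u x = c₁ * ulam x) ∧ (∀ t ∈ Icc (-1:ℝ) 1, w t = 0) ∧
      (∀ x ∈ Icc 0 b, v x = c₂ * vlam x)) ∧
    -- no Jordan chains: (𝓐 − λ)Y = c₁U + c₂V is unsolvable unless c₁ = c₂ = 0
    (∀ c₁ c₂ : ℂ, ¬ (c₁ = 0 ∧ c₂ = 0) →
      ¬ ∃ u w v, DomA a b α β u w v ∧
        MapA a b q r hh lam u w v (fun x => c₁ * ulam x) ZeroF (fun x => c₂ * vlam x)) := by
  have hr : ∀ x, 0 < r x := let ⟨m, hm, hmr⟩ := hrpos; fun x => hm.trans_le (hmr x)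
  have hleft : (-1 : ℝ) ∈ Icc (-1 : ℝ) 1 := left_mem_Icc.2 (by norm_num)
  have hright : (1 : ℝ) ∈ Icc (-1 : ℝ) 1 := right_mem_Icc.2 (by norm_num)
  refine ⟨hul.eigvecA b β hh, hvl.eigvecA a α hh, ?_, ?_⟩
  · rintro u w v ⟨hdom, hmap, -⟩
    obtain ⟨C, hQ⟩ := exists_norm_potential_le hqb hr hrb lam
    have hw := hdom.eqOn_zero_of_not_eigB hB hmap
    obtain ⟨c₁, hc₁⟩ := hul.exists_eq_const_mul hQ hdom hmap (hw _ hleft)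
    obtain ⟨c₂, hc₂⟩ := hvl.exists_eq_const_mul hQ hdom hmap (hw _ hright)
    exact ⟨c₁, c₂, hc₁, hw, hc₂⟩
  · rintro c₁ c₂ hne ⟨u, w, v, hdom, hmap⟩
    have hlam := hul.star_eq ha hr
    have hw := hdom.eqOn_zero_of_not_eigB hB hmap
    exact hne ⟨hul.coeff_eq_zero ha hr hlam hdom hmap (hw _ hleft),
      hvl.coeff_eq_zero hb hr hlam hdom hmap (hw _ hright)⟩

/-- if `λ ∈ σ(A_a) ∩ σ(A_b)` but `λ ∉ σ(B)`, then `λ` is an eigenvalue of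
`𝓐` of geometric and algebraic multiplicity `2`: the eigenspace is spanned by
`U = (u_λ,0,0)` and `V = (0,0,v_λ)`, and `(𝓐 − λ)Y = c₁U + c₂V` has no solution unless
`c₁ = c₂ = 0`; the root subspace equals the eigenspace. -/
theorem stmt13 (a b α β : ℝ) (ha : a < 0) (hb : 0 < b) (q r hh : ℝ → ℝ)
    (hqm : Measurable q) (hqb : ∃ M, ∀ x, |q x| ≤ M)
    (hrm : Measurable r) (hrpos : ∃ m > 0, ∀ x, m ≤ r x) (hrb : ∃ M, ∀ x, r x ≤ M)
    (hhm : Measurable hh) (hhpos : ∃ m > 0, ∀ t, m ≤ hh t) (hhb : ∃ M, ∀ t, hh t ≤ M)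
    (lam : ℂ)
    (hB : ¬ EigB hh lam)
    (ulam vlam : ℝ → ℂ)
    (hul : EigfunAa a α q r lam ulam) (hvl : EigfunAb b β q r lam vlam) :
    -- U and V are eigenvectors of 𝓐
    EigvecA a b α β q r hh lam ulam ZeroF ZeroF ∧
    EigvecA a b α β q r hh lam ZeroF ZeroF vlam ∧
    -- geometric multiplicity 2: every eigenvector is a combination of U and V
    (∀ u w v, EigvecA a b α β q r hh lam u w v → ∃ c₁ c₂ : ℂ,
      (∀ x ∈ Icc a 0, u x = c₁ * ulam x) ∧ (∀ t ∈ Icc (-1:ℝ) 1, w t = 0) ∧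
      (∀ x ∈ Icc 0 b, v x = c₂ * vlam x)) ∧
    -- no Jordan chains: (𝓐 − λ)Y = c₁U + c₂V is unsolvable unless c₁ = c₂ = 0
    (∀ c₁ c₂ : ℂ, ¬ (c₁ = 0 ∧ c₂ = 0) →
      ¬ ∃ u w v, DomA a b α β u w v ∧
        MapA a b q r hh lam u w v (fun x => c₁ * ulam x) ZeroF (fun x => c₂ * vlam x)) :=
  stmt13_general a b α β ha hb q r hh hqb hrpos hrb lam hB ulam vlam hul hvl
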